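/- Under the Lazy Set axioms A0–A2, if X ⇒ Y ⇒ Z and X is a Rem event, then X < Z. -/

import Mathlib

/-- Event type: Add, Rem, or Contains. -/
inductive EType | add | rem | cnt
deriving DecidableEq

/-- Status of an event: 0, 1, or f (failed). -/
inductive Status | s0 | s1 | sf
deriving DecidableEq

open EType Status

/-- A Tarskian system execution satisfying the Lazy Set axioms A0–A2.
Events are typed Add/Rem/Cnt; Add and Rem events are actions (with
Begin(E) = End(E) = E) and the actions are linearly ordered by the temporal
precedence relation `lt`; Cnt events are high-level with Begin(E) < End(E);
`γ` is defined on the Op¹ events and satisfies axioms A1 and A2. -/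
structure LazySys where
  E : Type
  lt : E → E → Prop
  typ : E → EType
  χ : E → Status
  kval : E → ℕ
  Begin : E → E
  End' : E → E
  γ : E → E
  action : E → Prop
  lt_irrefl : ∀ e, ¬ lt e e
  lt_trans : ∀ a b c, lt a b → lt b c → lt a c
  act_lin : ∀ a b, action a → action b → a ≠ b → lt a b ∨ lt b a
  addRem_action : ∀ e, typ e ≠ EType.cnt →
    action e ∧ Begin e = e ∧ End' e = e
  begin_end_action : ∀ e, action (Begin e) ∧ action (End' e)
  cnt_interval : ∀ e, typ e = EType.cnt → lt (Begin e) (End' e)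
  lt_iff : ∀ a b, lt a b ↔ lt (End' a) (Begin b)
  A1 : ∀ A, χ A = Status.s1 →
    typ (γ A) = EType.add ∧ χ (γ A) = Status.s0 ∧ kval (γ A) = kval A ∧
    lt (γ A) (End' A) ∧
    ¬ ∃ R, typ R = EType.rem ∧ χ R = Status.s1 ∧ γ R = γ A ∧
      lt (γ A) R ∧ lt R A
  A2 : ∀ A B, typ A = EType.add → χ A = Status.s0 → χ B = Status.s0 →
    lt A B → kval A = kval B →
    ∃ R, typ R = EType.rem ∧ χ R = Status.s1 ∧ γ R = A ∧ lt R (End' B)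

/-- The auxiliary relation ⇒ used in the linearization proof. -/
def LazySys.arrow (S : LazySys) (X Y : S.E) : Prop :=
  (S.typ Y = EType.cnt ∧ S.χ Y = Status.s1 ∧ X = S.γ Y) ∨
  (S.typ X = EType.cnt ∧ S.χ X = Status.s1 ∧
    S.typ Y = EType.rem ∧ S.χ Y = Status.s1 ∧ S.γ Y = S.γ X) ∨
  (S.typ X = EType.rem ∧ S.χ X = Status.s1 ∧
    S.typ Y = EType.cnt ∧ S.χ Y = Status.s0 ∧
    S.kval X = S.kval Y ∧ ¬ S.lt Y X ∧ S.lt (S.γ X) Y) ∨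
  (S.typ X = EType.cnt ∧ S.χ X = Status.s0 ∧
    S.typ Y = EType.add ∧ S.χ Y = Status.s0 ∧
    S.kval X = S.kval Y ∧ ¬ S.lt Y X)

/-!
The only shape of `X ⇒ Y ⇒ Z` with `X` a Rem event is `X` Rem¹, `Y` Cnt⁰, `Z` Add⁰, all of
one key, with `γ X < Y` and `¬ Z < Y`; the actions `γ X` and `Z` are comparable, so `γ X < Z`.
If `Z < X`, then `Z` would be a `0`-event of `X`'s key strictly between `γ X` and `X`.
-/

namespace LazySys

variable {S : LazySys}

theorem action_of_typ_ne_cnt {e : S.E} (he : S.typ e ≠ cnt) : S.action e :=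
  (S.addRem_action e he).1

theorem lt_of_lt_of_not_lt {a b c : S.E} (ha : S.action a) (hb : S.action b)
    (hac : S.lt a c) (hbc : ¬ S.lt b c) : S.lt a b := by
  rcases eq_or_ne a b with rfl | hne
  · exact absurd hac hbc
  · exact (S.act_lin a b ha hb hne).resolve_right fun hba => hbc (S.lt_trans _ _ _ hba hac)

theorem γ_lt_self_of_rem {R : S.E} (hR : S.typ R = rem) (hR1 : S.χ R = s1) :
    S.lt (S.γ R) R := by
  have hend := (S.addRem_action R (by simp [hR])).2.2
  simpa [hend] using (S.A1 R hR1).2.2.2.1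

/-- A2 would supply a `Rem¹` event `R` with `γ R = γ X` strictly between `γ X` and `X`,
which A1 forbids. -/
theorem not_γ_lt_of_lt {X Z : S.E} (hX1 : S.χ X = s1) (hZ0 : S.χ Z = s0)
    (hk : S.kval X = S.kval Z) (hZX : S.lt Z X) : ¬ S.lt (S.γ X) Z := by
  intro hγZ
  obtain ⟨hγ, hγ0, hγk, -, hnoR⟩ := S.A1 X hX1
  obtain ⟨R, hR, hR1, hRγ, hRZ⟩ := S.A2 (S.γ X) Z hγ hγ0 hZ0 hγZ (hγk.trans hk)
  have hRend : S.End' R = R := (S.addRem_action R (by simp [hR])).2.2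
  have hRX : S.lt R X := by
    rw [S.lt_iff, hRend]
    exact S.lt_trans _ _ _ hRZ ((S.lt_iff Z X).1 hZX)
  exact hnoR ⟨R, hR, hR1, hRγ, hRγ ▸ γ_lt_self_of_rem hR hR1, hRX⟩

theorem arrow_of_typ_rem {X Y : S.E} (hXY : S.arrow X Y) (hX : S.typ X = rem) :
    S.χ X = s1 ∧ S.typ Y = cnt ∧ S.χ Y = s0 ∧ S.kval X = S.kval Y ∧ S.lt (S.γ X) Y := by
  rcases hXY with ⟨-, hY1, rfl⟩ | ⟨hXc, -⟩ | ⟨-, hX1, hYc, hY0, hk, -, hγY⟩ | ⟨hXc, -⟩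
  · simp [(S.A1 Y hY1).1] at hX
  · simp [hX] at hXc
  · exact ⟨hX1, hYc, hY0, hk, hγY⟩
  · simp [hX] at hXc

theorem arrow_of_typ_cnt_of_s0 {Y Z : S.E} (hYZ : S.arrow Y Z) (hY : S.typ Y = cnt)
    (hY0 : S.χ Y = s0) :
    S.typ Z = add ∧ S.χ Z = s0 ∧ S.kval Y = S.kval Z ∧ ¬ S.lt Z Y := by
  rcases hYZ with ⟨-, hZ1, rfl⟩ | ⟨-, hY1, -⟩ | ⟨hYr, -⟩ | ⟨-, -, hZ, hZ0, hk, hZY⟩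
  · simp [(S.A1 Z hZ1).1] at hY
  · simp [hY0] at hY1
  · simp [hY] at hYr
  · exact ⟨hZ, hZ0, hk, hZY⟩

end LazySys

/-- Under the Lazy Set axioms A0–A2, if X ⇒ Y ⇒ Z and X is a
Rem event, then X < Z. -/
theorem stmt8 (S : LazySys) :
    ∀ X Y Z : S.E, S.arrow X Y → S.arrow Y Z → S.typ X = rem →
      S.lt X Z := by
  intro X Y Z hXY hYZ hX
  obtain ⟨hX1, hYc, hY0, hkXY, hγY⟩ := LazySys.arrow_of_typ_rem hXY hX
  obtain ⟨hZ, hZ0, hkYZ, hZY⟩ := LazySys.arrow_of_typ_cnt_of_s0 hYZ hYc hY0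
  have hXact : S.action X := LazySys.action_of_typ_ne_cnt (by simp [hX])
  have hZact : S.action Z := LazySys.action_of_typ_ne_cnt (by simp [hZ])
  have hγact : S.action (S.γ X) := LazySys.action_of_typ_ne_cnt (by simp [(S.A1 X hX1).1])
  have hne : X ≠ Z := by rintro rfl; simp [hX] at hZ
  refine (S.act_lin X Z hXact hZact hne).resolve_right fun hZX => ?_
  exact LazySys.not_γ_lt_of_lt hX1 hZ0 (hkXY.trans hkYZ) hZX
    (LazySys.lt_of_lt_of_not_lt hγact hZact hγY hZY)
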